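/- arXiv:1508.05424 — 2 statements merged into one kernel-verified Lean document; each statement's English description precedes it below -/
import Mathlib

section
/- Let N be a phylogenetic network on X, let T be a rooted binary phylogenetic X-tree displayed by N, let {a,b} be a cherry of T, and suppose there is a tree path in N from the parent p_i of a leaf i ∈ {a,b} to a leaf ℓ ∉ {a,b}. If p_i is a tree vertex whose other child begins this tree path, then N does not display T. (Equivalently: any rooted binary phylogenetic X-tree embedded in N must display the rooted triple iℓ|j where {i,j}={a,b}, contradicting that {a,b} is a cherry of T.) -/
/-- A directed graph with a distinguished vertex set, arc set and root,
intended to model (binary) phylogenetic networks. Since arcs form a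
`Finset` of ordered pairs, there are no parallel arcs. -/
structure Net (V : Type) [DecidableEq V] where
  verts : Finset V
  arcs : Finset (V × V)
  root : V

variable {V : Type} [DecidableEq V]

namespace Net

def Arc (N : Net V) (u v : V) : Prop := (u, v) ∈ N.arcs

def outdeg (N : Net V) (v : V) : ℕ := (N.arcs.filter (fun e => e.1 = v)).card

def indeg (N : Net V) (v : V) : ℕ := (N.arcs.filter (fun e => e.2 = v)).card

def IsLeaf (N : Net V) (v : V) : Prop := v ∈ N.verts ∧ N.outdeg v = 0

def IsRetic (N : Net V) (v : V) : Prop :=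
  v ∈ N.verts ∧ N.indeg v = 2 ∧ N.outdeg v = 1

def IsTreeVtx (N : Net V) (v : V) : Prop :=
  v ∈ N.verts ∧ N.indeg v = 1 ∧ N.outdeg v = 2

/-- The set of leaves (out-degree-zero vertices); this is the taxa set `X`. -/
def leaves (N : Net V) : Finset V := N.verts.filter (fun v => N.outdeg v = 0)

/-- The set of reticulation vertices. -/
def retics (N : Net V) : Finset V :=
  N.verts.filter (fun v => N.indeg v = 2 ∧ N.outdeg v = 1)

/-- `u` is an ancestor of `v`: there is a directed path from `u` to `v`.
(Reflexive, as in the reachability order.) -/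
def Ancestor (N : Net V) (u v : V) : Prop := Relation.ReflTransGen N.Arc u v

/-- `IsPathList N u v l` : `l` is the list of vertices of a directed path
from `u` to `v` in `N`. -/
inductive IsPathList (N : Net V) : V → V → List V → Prop
  | nil (v : V) : IsPathList N v v [v]
  | cons {u w x : V} {l : List V} : N.Arc u w → IsPathList N w x l →
      IsPathList N u x (u :: l)

/-- The leaf `ℓ` verifies the vertex `v`: every directed path from the root
to `ℓ` passes through `v`. -/
def Verifies (N : Net V) (ℓ v : V) : Prop :=
  ∀ l : List V, N.IsPathList N.root ℓ l → v ∈ l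

def Visible (N : Net V) (v : V) : Prop := ∃ ℓ, N.IsLeaf ℓ ∧ N.Verifies ℓ v

def ReticVisible (N : Net V) : Prop := ∀ v, N.IsRetic v → N.Visible v

/-- `N` is a (binary) phylogenetic network: a rooted acyclic digraph with no
parallel arcs in which the root has in-degree zero and out-degree two, every
other vertex is a leaf (in-degree one, out-degree zero), a tree vertex
(in-degree one, out-degree two) or a reticulation (in-degree two, out-degree
one); if there is a single vertex the network has no arcs. -/
def IsPhylo (N : Net V) : Prop :=
  N.root ∈ N.verts ∧
  (∀ e ∈ N.arcs, e.1 ∈ N.verts ∧ e.2 ∈ N.verts) ∧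
  (∀ v : V, ¬ Relation.TransGen N.Arc v v) ∧
  (∀ v ∈ N.verts, N.Ancestor N.root v) ∧
  (if N.verts.card = 1 then N.arcs = ∅
   else
    N.indeg N.root = 0 ∧ N.outdeg N.root = 2 ∧
    ∀ v ∈ N.verts, v ≠ N.root →
      (N.indeg v = 1 ∧ N.outdeg v = 0) ∨
      (N.indeg v = 1 ∧ N.outdeg v = 2) ∨
      (N.indeg v = 2 ∧ N.outdeg v = 1))

end Net

/-- The internal vertices of a path given as a list of vertices. -/
def internalVerts {V : Type} (l : List V) : List V := (l.drop 1).dropLast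

/-- `N.Displays T corr` : some subgraph of `N` is a subdivision of `T`; it is
witnessed by an embedding `f` of the vertices of `T` into `N` (with each leaf
`w` of `T` sent to a vertex related to it by the leaf correspondence `corr`)
together with, for every arc `e` of `T`, a directed path `P e` in `N` joining
the images of its endpoints, these paths being internally disjoint from one
another and from the images of the vertices of `T`. -/
def Net.Displays {V W : Type} [DecidableEq V] [DecidableEq W]
    (N : Net V) (T : Net W) (corr : W → V → Prop) : Prop :=
  ∃ (f : W → V) (P : W × W → List V),
    Set.InjOn f {w | w ∈ T.verts} ∧
    (∀ w, T.IsLeaf w → corr w (f w)) ∧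
    (∀ e ∈ T.arcs, N.IsPathList (f e.1) (f e.2) (P e) ∧ 2 ≤ (P e).length) ∧
    (∀ e ∈ T.arcs, ∀ x ∈ internalVerts (P e), ∀ w ∈ T.verts, f w ≠ x) ∧
    (∀ e ∈ T.arcs, ∀ e' ∈ T.arcs, e ≠ e' →
      ∀ x ∈ internalVerts (P e), x ∉ internalVerts (P e'))

/-- `c` is a bijective correspondence between the leaves of `T` and the
leaves of `N` (both leaf sets being labelled by the same taxa set `X`). -/
def LeafCorr {V W : Type} [DecidableEq V] [DecidableEq W]
    (T : Net W) (N : Net V) (c : W → V) : Prop :=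
  (∀ w, T.IsLeaf w → N.IsLeaf (c w)) ∧
  (∀ w w', T.IsLeaf w → T.IsLeaf w' → c w = c w' → w = w') ∧
  (∀ v, N.IsLeaf v → ∃ w, T.IsLeaf w ∧ c w = v)

/-- A tree path: a directed path in which every vertex except possibly the
first one is a tree vertex or a leaf. -/
def Net.IsTreePath {V : Type} [DecidableEq V] (N : Net V)
    (u v : V) (l : List V) : Prop :=
  N.IsPathList u v l ∧ ∀ x ∈ l.drop 1, N.IsTreeVtx x ∨ N.IsLeaf x

/-!
Every vertex of the tree path `x ⋯ ℓ'` has in-degree one and its parent is `pᵢ` or lies on the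
path, so a directed path entering the tree path from outside passes through `pᵢ`. Under the
embedding `f` of a display, the root of `T` lands above `pᵢ`, hence off the tree path, while the
leaf labelled `ℓ'` lands on it; so some arc `(z, w)` of `T` has `f w` on the tree path and its
display path through `pᵢ`. Since `c wa` has in-degree one, `pᵢ` also lies on the display path
of `(wt, wa)`. Internal disjointness of display paths then forces `z = wt`, and `w` is a third
child of `wt`.
-/

namespace Net

variable {N : Net V} {u v w z : V} {q : List V}

theorem IsPathList.exists_eq_cons (h : N.IsPathList u v q) : ∃ t, q = u :: t := by
  cases h <;> exact ⟨_, rfl⟩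

theorem IsPathList.of_cons_cons {u' : V} (h : N.IsPathList u' v (u' :: u :: q)) :
    N.IsPathList u v (u :: q) := by
  cases h with
  | cons _ h => obtain ⟨_, ⟨⟩⟩ := h.exists_eq_cons; exact h

theorem IsPathList.getLast?_eq (h : N.IsPathList u v q) : q.getLast? = some v := by
  induction h with
  | nil => rfl
  | cons _ h ih =>
    obtain ⟨t, rfl⟩ := h.exists_eq_cons
    simpa [List.getLast?_cons] using ih

theorem IsPathList.end_mem (h : N.IsPathList u v q) : v ∈ q :=
  List.mem_of_getLast? h.getLast?_eq

theorem IsPathList.ancestor_of_mem (h : N.IsPathList u v q) (hz : z ∈ q) :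
    N.Ancestor u z := by
  induction h with
  | nil => rw [List.mem_singleton.mp hz]; exact .refl
  | cons hu _ ih =>
    rcases List.mem_cons.mp hz with rfl | hz
    · exact .refl
    · exact .head hu (ih hz)

theorem IsPathList.ancestor_end_of_mem (h : N.IsPathList u v q) (hz : z ∈ q) :
    N.Ancestor z v := by
  induction h with
  | nil => rw [List.mem_singleton.mp hz]; exact .refl
  | cons hu h ih =>
    rcases List.mem_cons.mp hz with rfl | hz
    · exact .head hu (h.ancestor_of_mem h.end_mem)
    · exact ih hz

theorem IsPathList.exists_arc_of_mem_drop_one (h : N.IsPathList u v q) (hz : z ∈ q.drop 1) :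
    ∃ y ∈ q, N.Arc y z := by
  induction h with
  | nil => simp at hz
  | cons hu h ih =>
    obtain ⟨t, rfl⟩ := h.exists_eq_cons
    rcases List.mem_cons.mp (by simpa using hz) with rfl | hz
    · exact ⟨_, List.mem_cons_self, hu⟩
    · obtain ⟨y, hy, hyz⟩ := ih (by simpa using hz)
      exact ⟨y, List.mem_cons_of_mem _ hy, hyz⟩

theorem IsPathList.eq_start_or_mem_internalVerts (h : N.IsPathList u v q) (hz : z ∈ q)
    (hzv : z ≠ v) : z = u ∨ z ∈ internalVerts q := by
  cases h with
  | nil => exact Or.inl (List.mem_singleton.mp hz)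
  | cons _ h =>
    rcases List.mem_cons.mp hz with rfl | hzt
    · exact Or.inl rfl
    · refine Or.inr ?_
      simpa [internalVerts] using
        List.mem_dropLast_of_mem_of_ne_getLast? hzt (by simpa [h.getLast?_eq] using hzv)

theorem IsPathList.start_mem_or_mem {S : Set V} {p : V}
    (hS : ∀ ⦃y z⦄, z ∈ S → N.Arc y z → y ∈ S ∨ y = p) (h : N.IsPathList u v q)
    (hv : v ∈ S) :
    u ∈ S ∨ p ∈ q := by
  induction h with
  | nil => exact Or.inl hv
  | cons hu _ ih =>
    rcases ih hv with hw | hp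
    · rcases hS hw hu with hu | rfl
      · exact Or.inl hu
      · exact Or.inr List.mem_cons_self
    · exact Or.inr (List.mem_cons_of_mem _ hp)

theorem arc_eq_of_indeg_eq_one (hv : N.indeg v = 1) (hu : N.Arc u v) (hw : N.Arc w v) :
    u = w :=
  congrArg Prod.fst <| Finset.card_le_one.mp hv.le _ (Finset.mem_filter.mpr ⟨hu, rfl⟩) _
    (Finset.mem_filter.mpr ⟨hw, rfl⟩)

theorem IsPathList.mem_of_indeg_eq_one {p : V} (h : N.IsPathList u v q) (huv : u ≠ v)
    (hv : N.indeg v = 1) (hp : N.Arc p v) : p ∈ q := by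
  refine (h.start_mem_or_mem (S := {v}) ?_ rfl).resolve_left huv
  rintro y z rfl hyz
  exact Or.inr (arc_eq_of_indeg_eq_one hv hyz hp)

theorem outdeg_ne_zero_of_arc (h : N.Arc u v) : N.outdeg u ≠ 0 :=
  Finset.card_ne_zero_of_mem (Finset.mem_filter.mpr ⟨h, rfl⟩)

theorem indeg_ne_zero_of_arc (h : N.Arc u v) : N.indeg v ≠ 0 :=
  Finset.card_ne_zero_of_mem (Finset.mem_filter.mpr ⟨h, rfl⟩)

theorem IsLeaf.not_arc (hv : N.IsLeaf v) : ¬ N.Arc v w := fun h =>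
  outdeg_ne_zero_of_arc h hv.2

theorem IsLeaf.eq_of_ancestor (hv : N.IsLeaf v) (h : N.Ancestor v w) : w = v := by
  rcases h.cases_head with rfl | ⟨_, hvu, _⟩
  · rfl
  · exact absurd hvu hv.not_arc

theorem three_le_outdeg {a b c : V} (hab : a ≠ b) (hac : a ≠ c) (hbc : b ≠ c)
    (ha : N.Arc u a) (hb : N.Arc u b) (hc : N.Arc u c) : 3 ≤ N.outdeg u := by
  have hsub : ({(u, a), (u, b), (u, c)} : Finset (V × V)) ⊆ N.arcs.filter (·.1 = u) := by
    simp only [Finset.insert_subset_iff, Finset.singleton_subset_iff, Finset.mem_filter,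
      and_true]
    exact ⟨ha, hb, hc⟩
  simpa [outdeg, Finset.card_insert_of_notMem, hab, hac, hbc] using Finset.card_le_card hsub

theorem IsPhylo.fst_mem_verts (hN : N.IsPhylo) (h : N.Arc u v) : u ∈ N.verts := (hN.2.1 _ h).1

theorem IsPhylo.root_ancestor (hN : N.IsPhylo) (hv : v ∈ N.verts) : N.Ancestor N.root v :=
  hN.2.2.2.1 v hv

theorem IsPhylo.not_ancestor_of_arc (hN : N.IsPhylo) (h : N.Arc u v) : ¬ N.Ancestor v u :=
  fun hvu => hN.2.2.1 u (.head' h hvu)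

theorem IsPhylo.ne_of_arc (hN : N.IsPhylo) (h : N.Arc u v) : u ≠ v :=
  fun huv => hN.not_ancestor_of_arc h (huv ▸ .refl)

theorem IsPhylo.outdeg_le_two (hN : N.IsPhylo) (hv : v ∈ N.verts) : N.outdeg v ≤ 2 := by
  obtain ⟨-, -, -, -, hdeg⟩ := hN
  split_ifs at hdeg
  · simp [outdeg, hdeg]
  · obtain ⟨-, hroot, hclass⟩ := hdeg
    by_cases hr : v = N.root
    · exact hr ▸ hroot.le
    · rcases hclass v hv hr with ⟨-, h⟩ | ⟨-, h⟩ | ⟨-, h⟩ <;> omega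

theorem IsPhylo.eq_or_eq_of_arc {a b c : V} (hN : N.IsPhylo) (hab : a ≠ b) (ha : N.Arc u a)
    (hb : N.Arc u b) (hc : N.Arc u c) : c = a ∨ c = b := by
  by_contra! h
  exact (hN.outdeg_le_two (hN.fst_mem_verts ha)).not_gt
    (three_le_outdeg hab h.1.symm h.2.symm ha hb hc)

theorem IsPhylo.indeg_eq_one_of_isLeaf (hN : N.IsPhylo) (hv : N.IsLeaf v) (hu : N.Arc u v) :
    N.indeg v = 1 := by
  obtain ⟨-, -, -, -, hdeg⟩ := hN
  have hpos := indeg_ne_zero_of_arc hu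
  split_ifs at hdeg
  · simp [Arc, hdeg] at hu
  · obtain ⟨hroot, -, hclass⟩ := hdeg
    have hr : v ≠ N.root := fun h => hpos (h ▸ hroot)
    rcases hclass v hv.1 hr with ⟨h, -⟩ | ⟨-, h⟩ | ⟨-, h⟩ <;> simp_all [IsLeaf]

theorem IsTreePath.arc_mem_or_eq (hN : N.IsPhylo) (h : N.IsTreePath u v (u :: q)) :
    ∀ ⦃y z⦄, z ∈ q → N.Arc y z → y ∈ q ∨ y = u := by
  intro y z hz hyz
  have hz' : z ∈ (u :: q).drop 1 := by simpa using hz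
  obtain ⟨y', hy', hy'z⟩ := h.1.exists_arc_of_mem_drop_one hz'
  have hdeg : N.indeg z = 1 := (h.2 z hz').elim (·.2.1) (hN.indeg_eq_one_of_isLeaf · hyz)
  rw [arc_eq_of_indeg_eq_one hdeg hyz hy'z]
  exact (List.mem_cons.mp hy').symm

section Display

variable {W : Type} [DecidableEq W] {T : Net W} {f : W → V} {P : W × W → List V}

theorem Ancestor.map (hpath : ∀ e ∈ T.arcs, N.IsPathList (f e.1) (f e.2) (P e))
    {a b : W} (h : T.Ancestor a b) : N.Ancestor (f a) (f b) :=
  Relation.ReflTransGen.lift' f (fun a b hab => (hpath (a, b) hab).ancestor_of_mem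
    (hpath (a, b) hab).end_mem) _ _ h

theorem exists_arc_mem_path_of_map_mem {S : Set V} {p : V}
    (hS : ∀ ⦃y z⦄, z ∈ S → N.Arc y z → y ∈ S ∨ y = p)
    (hpath : ∀ e ∈ T.arcs, N.IsPathList (f e.1) (f e.2) (P e))
    {r w : W} (hr : f r ∉ S) (hrw : T.Ancestor r w) (hw : f w ∈ S) :
    ∃ a b, T.Arc a b ∧ f b ∈ S ∧ p ∈ P (a, b) := by
  induction hrw with
  | refl => exact absurd hw hr
  | @tail a b _ hab ih =>
    by_cases ha : f a ∈ S
    · exact ih ha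
    · exact ⟨a, b, hab, hw, ((hpath _ hab).start_mem_or_mem hS hw).resolve_left ha⟩

theorem fst_eq_of_mem_paths
    (hinj : Set.InjOn f {w | w ∈ T.verts})
    (hpath : ∀ e ∈ T.arcs, N.IsPathList (f e.1) (f e.2) (P e))
    (hint : ∀ e ∈ T.arcs, ∀ x ∈ internalVerts (P e), ∀ w ∈ T.verts, f w ≠ x)
    (hdisj : ∀ e ∈ T.arcs, ∀ e' ∈ T.arcs, e ≠ e' →
      ∀ x ∈ internalVerts (P e), x ∉ internalVerts (P e'))
    {e e' : W × W} (he : e ∈ T.arcs) (he' : e' ∈ T.arcs)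
    (hv : e.1 ∈ T.verts) (hv' : e'.1 ∈ T.verts) {p : V}
    (hp : p ∈ P e) (hp' : p ∈ P e') (hpe : p ≠ f e.2) (hpe' : p ≠ f e'.2) : e.1 = e'.1 := by
  rcases (hpath e he).eq_start_or_mem_internalVerts hp hpe with h | h <;>
    rcases (hpath e' he').eq_start_or_mem_internalVerts hp' hpe' with h' | h'
  · exact hinj hv hv' (h.symm.trans h')
  · exact absurd h.symm (hint e' he' p h' _ hv)
  · exact absurd h'.symm (hint e he p h _ hv')
  · by_contra hne
    exact hdisj e he e' he' (fun h => hne (congrArg Prod.fst h)) p h h'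

end Display

end Net

theorem stmt_16_general {V W : Type} [DecidableEq V] [DecidableEq W]
    (N : Net V) (T : Net W) (c : W → V)
    (hN : N.IsPhylo) (hT : T.IsPhylo)
    (hc : LeafCorr T N c)
    (wa wb wt : W)
    (hwa : T.IsLeaf wa) (hwb : T.IsLeaf wb) (hwab : wa ≠ wb)
    (hwta : T.Arc wt wa) (hwtb : T.Arc wt wb)
    (pᵢ x ℓ' : V) (l : List V)
    (hpia : N.Arc pᵢ (c wa))
    (hpix : N.Arc pᵢ x)
    (htp : N.IsTreePath pᵢ ℓ' (pᵢ :: x :: l))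
    (hℓ : N.IsLeaf ℓ') (hℓa : ℓ' ≠ c wa) (hℓb : ℓ' ≠ c wb) :
    ¬ N.Displays T (fun w v => v = c w) := by
  rintro ⟨f, P, hinj, hleaf, hpaths, hint, hdisj⟩
  have hpath : ∀ e ∈ T.arcs, N.IsPathList (f e.1) (f e.2) (P e) := fun e he => (hpaths e he).1
  have hx := htp.1.of_cons_cons
  set S : Set V := {y | y ∈ x :: l}
  have hSp : ∀ z ∈ S, ¬ N.Ancestor z pᵢ := fun z hz hzp =>
    hN.not_ancestor_of_arc hpix ((hx.ancestor_of_mem hz).trans hzp)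
  have hSleaf : ∀ w, T.IsLeaf w → f w ∈ S → ℓ' = c w := fun w hw hfw =>
    (hc.1 w hw).eq_of_ancestor (hleaf w hw ▸ hx.ancestor_end_of_mem hfw)
  have hwt : wt ∈ T.verts := hT.fst_mem_verts hwta
  have hfa : f wa = c wa := hleaf wa hwa
  have hpP : pᵢ ∈ P (wt, wa) := (hpath _ hwta).mem_of_indeg_eq_one
    (hinj.ne hwt hwa.1 (hT.ne_of_arc hwta))
    (hfa ▸ hN.indeg_eq_one_of_isLeaf (hc.1 wa hwa) hpia) (hfa ▸ hpia)
  have hroot : f T.root ∉ S := fun h =>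
    hSp _ h (((hT.root_ancestor hwt).map hpath).trans ((hpath _ hwta).ancestor_of_mem hpP))
  obtain ⟨w', hw', rfl⟩ := hc.2.2 ℓ' hℓ
  obtain ⟨z, w, hzw, hwS, hpw⟩ := Net.exists_arc_mem_path_of_map_mem (htp.arc_mem_or_eq hN)
    hpath hroot (hT.root_ancestor hw'.1) (hleaf w' hw' ▸ hx.end_mem)
  obtain rfl : z = wt := Net.fst_eq_of_mem_paths (e := (z, w)) hinj hpath hint hdisj hzw hwta
    (hT.fst_mem_verts hzw) hwt hpw hpP (ne_of_mem_of_not_mem hwS (hSp pᵢ · .refl)).symm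
    (hfa ▸ hN.ne_of_arc hpia)
  rcases hT.eq_or_eq_of_arc hwab hwta hwtb hzw with rfl | rfl
  · exact hℓa (hSleaf w hwa hwS)
  · exact hℓb (hSleaf w hwb hwS)

/-- Let `{a, b}` (leaves `wa, wb` of `T` with common parent `wt`) be a cherry
of the rooted binary phylogenetic `X`-tree `T`.  If in `N` the parent `pᵢ` of
the leaf `c wa` is a tree vertex whose other child `x` begins a tree path to
a leaf `ℓ'` distinct from the leaves corresponding to `wa` and `wb`, then `N`
does not display `T`. -/
theorem stmt_16 {V W : Type} [DecidableEq V] [DecidableEq W]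
    (N : Net V) (T : Net W) (c : W → V)
    (hN : N.IsPhylo) (hT : T.IsPhylo) (hTtree : T.retics = ∅)
    (hc : LeafCorr T N c)
    (wa wb wt : W)
    (hwa : T.IsLeaf wa) (hwb : T.IsLeaf wb) (hwab : wa ≠ wb)
    (hwta : T.Arc wt wa) (hwtb : T.Arc wt wb)
    (pᵢ x ℓ' : V) (l : List V)
    (hpi : N.IsTreeVtx pᵢ) (hpia : N.Arc pᵢ (c wa))
    (hpix : N.Arc pᵢ x) (hxne : x ≠ c wa)
    (htp : N.IsTreePath pᵢ ℓ' (pᵢ :: x :: l))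
    (hℓ : N.IsLeaf ℓ') (hℓa : ℓ' ≠ c wa) (hℓb : ℓ' ≠ c wb) :
    ¬ N.Displays T (fun w v => v = c w) :=
  stmt_16_general N T c hN hT hc wa wb wt hwa hwb hwab hwta hwtb pᵢ x ℓ' l hpia hpix htp hℓ hℓa hℓb
end

section
/- Every reticulation-visible phylogenetic network on X with m = |X| ≥ 2 leaves has at most 4m − 4 tree vertices (vertices of in-degree one and out-degree two), counting the root as a tree-like vertex among the non-leaf, non-reticulation vertices. -/
variable {V : Type} [DecidableEq V]

/-!
Split the vertices that are not reticulations into tree components: maximal subtrees reached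
from a component root (the root of the network or the child of a reticulation) along arcs into
non-reticulations. Visibility forbids a reticulation whose child is a reticulation, so there are
exactly `r + 1` components, and at most `m` of them contain a leaf. A component without a leaf has
a deepest vertex whose two children are reticulations, and it contains both parents of some
reticulation: otherwise it would contain every vertex all of whose root paths pass through its
root, among them a leaf verifying the reticulation above it. So at least three of the `2r` arcs
into reticulations leave such a component. Hence `3 (r + 1 - m) ≤ 2r`, that is `r ≤ 3m - 3`.
Counting arcs by heads and by tails gives `t = r + m - 1` for the number `t` of non-leaf
non-reticulation vertices, so `t ≤ 4m - 4`.
-/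

namespace Net

open Finset

variable {N : Net V} {u v w a c ρ : V}

theorem exists_arc_of_outdeg_ne_zero (h : N.outdeg v ≠ 0) : ∃ w, N.Arc v w := by
  obtain ⟨e, he⟩ := card_ne_zero.1 h
  obtain ⟨harc, rfl⟩ := mem_filter.1 he
  exact ⟨e.2, harc⟩

theorem exists_arc_of_indeg_ne_zero (h : N.indeg v ≠ 0) : ∃ u, N.Arc u v := by
  obtain ⟨e, he⟩ := card_ne_zero.1 h
  obtain ⟨harc, rfl⟩ := mem_filter.1 he
  exact ⟨e.1, harc⟩

theorem not_arc_of_indeg_eq_zero (h : N.indeg v = 0) : ¬ N.Arc u v := fun huv =>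
  (card_pos.2 ⟨(u, v), mem_filter.2 ⟨huv, rfl⟩⟩ : 0 < N.indeg v).ne' h

theorem eq_of_arc_of_outdeg_eq_one (h : N.outdeg u = 1) (hv : N.Arc u v) (hw : N.Arc u w) :
    v = w := by
  have := card_le_one.1 h.le (u, v) (mem_filter.2 ⟨hv, rfl⟩) (u, w)
    (mem_filter.2 ⟨hw, rfl⟩)
  exact congrArg Prod.snd this

theorem eq_of_arc_of_indeg_eq_one (h : N.indeg w = 1) (hu : N.Arc u w) (hv : N.Arc v w) :
    u = v := by
  have := card_le_one.1 h.le (u, w) (mem_filter.2 ⟨hu, rfl⟩) (v, w)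
    (mem_filter.2 ⟨hv, rfl⟩)
  exact congrArg Prod.fst this

theorem exists_arc_ne_of_indeg_eq_two (h : N.indeg v = 2) (u : V) : ∃ p, p ≠ u ∧ N.Arc p v := by
  obtain ⟨e, he, heu⟩ := exists_mem_ne (h ▸ one_lt_two) (u, v)
  obtain ⟨harc, rfl⟩ := mem_filter.1 he
  exact ⟨e.1, fun h => heu (Prod.ext h rfl), harc⟩

theorem exists_arcs_ne_of_outdeg_eq_two (h : N.outdeg u = 2) :
    ∃ a b, a ≠ b ∧ N.Arc u a ∧ N.Arc u b := by
  obtain ⟨e, he, f, hf, hef⟩ := one_lt_card.1 (h ▸ one_lt_two)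
  obtain ⟨harc, rfl⟩ := mem_filter.1 he
  obtain ⟨hf, hfe⟩ := mem_filter.1 hf
  exact ⟨e.2, f.2, fun h => hef (Prod.ext hfe.symm h), harc, hfe ▸ hf⟩

theorem sum_outdeg_eq_sum_indeg (h : ∀ e ∈ N.arcs, e.1 ∈ N.verts ∧ e.2 ∈ N.verts) :
    ∑ v ∈ N.verts, N.outdeg v = ∑ v ∈ N.verts, N.indeg v :=
  (card_eq_sum_card_fiberwise fun e he => (h e he).1).symm.trans
    (card_eq_sum_card_fiberwise fun e he => (h e he).2)

theorem mem_leaves : v ∈ N.leaves ↔ N.IsLeaf v := mem_filter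

theorem mem_retics : v ∈ N.retics ↔ N.IsRetic v := mem_filter

theorem IsLeaf.ne_of_isRetic (hv : N.IsLeaf v) (hρ : N.IsRetic ρ) : v ≠ ρ := by
  rintro rfl
  exact absurd (hv.2.symm.trans hρ.2.2) zero_ne_one

theorem Ancestor.of_outdeg_eq_one (h : N.Ancestor ρ v) (hρ : N.outdeg ρ = 1) (hc : N.Arc ρ c)
    (hv : v ≠ ρ) : N.Ancestor c v := by
  rcases h.cases_head with rfl | ⟨c', hc', hc'v⟩
  · exact absurd rfl hv
  · rwa [eq_of_arc_of_outdeg_eq_one hρ hc hc']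

theorem IsPathList.start_mem {l : List V} (h : N.IsPathList u v l) : u ∈ l := by
  cases h <;> simp

theorem IsPathList.append_arc {l : List V} (h : N.IsPathList u v l) (hvw : N.Arc v w) :
    N.IsPathList u w (l ++ [w]) := by
  induction h with
  | nil => exact .cons hvw (.nil _)
  | cons hu _ ih => exact .cons hu (ih hvw)

theorem exists_isPathList (h : N.Ancestor u v) : ∃ l, N.IsPathList u v l := by
  induction h with
  | refl => exact ⟨_, .nil u⟩
  | tail _ hvw ih =>
    obtain ⟨l, hl⟩ := ih
    exact ⟨_, hl.append_arc hvw⟩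

theorem IsPathList.ancestor {l : List V} (h : N.IsPathList u v l) : N.Ancestor u v := by
  induction h with
  | nil => exact .refl
  | cons hu _ ih => exact .head hu ih

theorem IsPathList.ancestor_of_mem_s17 {l : List V} (h : N.IsPathList u v l) (ha : a ∈ l) :
    N.Ancestor a v := by
  induction h with
  | nil =>
    obtain rfl := List.mem_singleton.1 ha
    exact .refl
  | cons hu hp ih =>
    rcases List.mem_cons.1 ha with rfl | ha
    · exact .head hu hp.ancestor
    · exact ih ha

theorem IsPathList.exists_arc_of_mem {l : List V} (h : N.IsPathList u v l) (ha : a ∈ l)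
    (hav : a ≠ v) : ∃ b ∈ l, N.Arc a b := by
  induction h with
  | nil => exact absurd (List.mem_singleton.1 ha) hav
  | cons hu hp ih =>
    rcases List.mem_cons.1 ha with rfl | ha
    · exact ⟨_, List.mem_cons_of_mem _ hp.start_mem, hu⟩
    · obtain ⟨b, hb, hab⟩ := ih ha hav
      exact ⟨b, List.mem_cons_of_mem _ hb, hab⟩

theorem verifies_root (v : V) : N.Verifies v N.root := fun _ hl => hl.start_mem

theorem Verifies.eq_root (h : N.Verifies N.root a) : a = N.root :=
  List.mem_singleton.1 (h _ (.nil _))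

theorem Verifies.of_arc (h : N.Verifies v a) (hva : v ≠ a) (huv : N.Arc u v) :
    N.Verifies u a := fun _ hl =>
  (List.mem_append.1 (h _ (hl.append_arc huv))).resolve_right
    (mt List.mem_singleton.1 hva.symm)

/-- The case `N.verts.card ≠ 1` of `IsPhylo`, with its clauses named. -/
structure IsRootedBinary (N : Net V) : Prop where
  root_mem : N.root ∈ N.verts
  arcs_mem : ∀ e ∈ N.arcs, e.1 ∈ N.verts ∧ e.2 ∈ N.verts
  acyclic : ∀ v, ¬ Relation.TransGen N.Arc v v
  ancestor_of_mem_s17 : ∀ v ∈ N.verts, N.Ancestor N.root v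
  indeg_root : N.indeg N.root = 0
  outdeg_root : N.outdeg N.root = 2
  degrees : ∀ v ∈ N.verts, v ≠ N.root →
    (N.indeg v = 1 ∧ N.outdeg v = 0) ∨ (N.indeg v = 1 ∧ N.outdeg v = 2) ∨
      (N.indeg v = 2 ∧ N.outdeg v = 1)

theorem IsPhylo.isRootedBinary (h : N.IsPhylo) (hcard : N.verts.card ≠ 1) :
    N.IsRootedBinary := by
  obtain ⟨h₁, h₂, h₃, h₄, h₅⟩ := h
  rw [if_neg hcard] at h₅
  exact ⟨h₁, h₂, h₃, h₄, h₅.1, h₅.2.1, h₅.2.2⟩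

theorem Verifies.ancestor (h : N.Verifies v a) (hN : N.IsRootedBinary) (hv : v ∈ N.verts) :
    N.Ancestor a v := by
  obtain ⟨l, hl⟩ := exists_isPathList (hN.ancestor_of_mem_s17 v hv)
  exact hl.ancestor_of_mem_s17 (h l hl)

open scoped Classical in
noncomputable def properAncestors (N : Net V) (v : V) : Finset V :=
  N.verts.filter fun u => Relation.TransGen N.Arc u v

open scoped Classical in
theorem mem_properAncestors :
    u ∈ N.properAncestors v ↔ u ∈ N.verts ∧ Relation.TransGen N.Arc u v :=
  mem_filter

def TreeArc (N : Net V) (u v : V) : Prop := N.Arc u v ∧ ¬ N.IsRetic v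

def TreeReach (N : Net V) : V → V → Prop := Relation.ReflTransGen N.TreeArc

theorem TreeReach.not_isRetic (h : N.TreeReach c v) (hc : ¬ N.IsRetic c) : ¬ N.IsRetic v := by
  induction h with
  | refl => exact hc
  | tail _ huv => exact huv.2

open scoped Classical in
/-- The roots of the tree components: the root of the network and the children of reticulations. -/
noncomputable def compRoots (N : Net V) : Finset V :=
  N.verts.filter fun c => ¬ N.IsRetic c ∧ ∀ u, N.Arc u c → N.IsRetic u

open scoped Classical in
theorem mem_compRoots :
    c ∈ N.compRoots ↔ c ∈ N.verts ∧ ¬ N.IsRetic c ∧ ∀ u, N.Arc u c → N.IsRetic u :=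
  mem_filter

def IsExposed (N : Net V) (c : V) : Prop := ∃ ℓ, N.IsLeaf ℓ ∧ N.TreeReach c ℓ

def reticArcs (N : Net V) : Finset (V × V) := N.arcs.filter fun e => e.2 ∈ N.retics

theorem card_reticArcs_le : #N.reticArcs ≤ 2 * #N.retics :=
  card_le_mul_card_image_of_maps_to (fun _ he => (mem_filter.1 he).2) 2 fun _ hv =>
    (card_le_card (filter_subset_filter _ (filter_subset _ _))).trans (mem_retics.1 hv).2.1.le

def treeLikeVerts (N : Net V) : Finset V :=
  N.verts.filter fun v => N.outdeg v ≠ 0 ∧ ¬ (N.indeg v = 2 ∧ N.outdeg v = 1)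

namespace IsRootedBinary

variable (hN : N.IsRootedBinary)
include hN

theorem mem_left (h : N.Arc u v) : u ∈ N.verts := (hN.arcs_mem _ h).1

theorem mem_right (h : N.Arc u v) : v ∈ N.verts := (hN.arcs_mem _ h).2

theorem ne_root_of_arc (h : N.Arc u v) : v ≠ N.root := by
  rintro rfl
  exact not_arc_of_indeg_eq_zero hN.indeg_root h

theorem not_isRetic_root : ¬ N.IsRetic N.root := fun h => by
  have := h.2.1
  rw [hN.indeg_root] at this
  omega

theorem indeg_eq_one (hv : v ∈ N.verts) (hroot : v ≠ N.root) (hr : ¬ N.IsRetic v) :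
    N.indeg v = 1 := by
  rcases hN.degrees v hv hroot with h | h | h
  exacts [h.1, h.1, absurd ⟨hv, h⟩ hr]

theorem exists_arc_of_ne_root (hv : v ∈ N.verts) (hroot : v ≠ N.root) : ∃ u, N.Arc u v :=
  exists_arc_of_indeg_ne_zero (by rcases hN.degrees v hv hroot with h | h | h <;> omega)

theorem card_properAncestors_lt (h : N.Arc u v) :
    #(N.properAncestors u) < #(N.properAncestors v) := by
  refine card_lt_card ((ssubset_iff_of_subset fun x hx => ?_).2 ⟨u, ?_, fun hu => ?_⟩)
  · rw [mem_properAncestors] at hx ⊢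
    exact ⟨hx.1, hx.2.tail h⟩
  · exact mem_properAncestors.2 ⟨hN.mem_left h, .single h⟩
  · exact hN.acyclic u (mem_properAncestors.1 hu).2

theorem wellFounded_arc : WellFounded N.Arc :=
  Subrelation.wf (hN.card_properAncestors_lt ·) (measure fun v => #(N.properAncestors v)).wf

theorem eq_of_treeReach {c₁ c₂ : V} (hc₁ : c₁ ∈ N.compRoots) (hc₂ : c₂ ∈ N.compRoots)
    (h₁ : N.TreeReach c₁ v) (h₂ : N.TreeReach c₂ v) : c₁ = c₂ := by
  obtain ⟨-, hr₁, hpar₁⟩ := mem_compRoots.1 hc₁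
  obtain ⟨-, hr₂, hpar₂⟩ := mem_compRoots.1 hc₂
  induction h₁ with
  | refl =>
    rcases h₂.cases_tail with rfl | ⟨q, hq, hqc⟩
    · rfl
    · exact absurd (hpar₁ q hqc.1) (TreeReach.not_isRetic hq hr₂)
  | tail hq hqv ih =>
    rcases h₂.cases_tail with rfl | ⟨q', hq', hq'v⟩
    · exact absurd (hpar₂ _ hqv.1) (TreeReach.not_isRetic hq hr₁)
    · have hv := hN.indeg_eq_one (hN.mem_right hqv.1) (hN.ne_root_of_arc hqv.1) hqv.2
      obtain rfl := eq_of_arc_of_indeg_eq_one hv hqv.1 hq'v.1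
      exact ih hq'

theorem card_treeLikeVerts_add_one : #N.treeLikeVerts + 1 = #N.retics + #N.leaves := by
  -- `outdeg - indeg` is `2` at the root, `1` at tree vertices and `-1` at leaves and reticulations
  have key : ∀ v ∈ N.verts, N.outdeg v + (if N.outdeg v = 0 then 1 else 0) +
      (if N.indeg v = 2 ∧ N.outdeg v = 1 then 1 else 0) = N.indeg v +
      (if N.outdeg v ≠ 0 ∧ ¬ (N.indeg v = 2 ∧ N.outdeg v = 1) then 1 else 0) +
      (if v = N.root then 1 else 0) := by
    intro v hv
    by_cases hroot : v = N.root
    · subst hroot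
      simp [hN.indeg_root, hN.outdeg_root]
    · rcases hN.degrees v hv hroot with ⟨h₁, h₂⟩ | ⟨h₁, h₂⟩ | ⟨h₁, h₂⟩ <;> simp [h₁, h₂, hroot]
  have hsum := sum_congr rfl key
  simp only [sum_add_distrib, sum_boole, Nat.cast_id, filter_eq', if_pos hN.root_mem,
    card_singleton, sum_outdeg_eq_sum_indeg hN.arcs_mem] at hsum
  rw [treeLikeVerts, retics, leaves]
  omega

theorem card_le_card_leaves {s : Finset V} (hs : ∀ c ∈ s, c ∈ N.compRoots ∧ N.IsExposed c) :
    #s ≤ #N.leaves := by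
  refine card_le_card_of_forall_subsingleton N.TreeReach (fun c hc => ?_)
    fun ℓ _ c₁ h₁ c₂ h₂ => hN.eq_of_treeReach (hs c₁ h₁.1).1 (hs c₂ h₂.1).1 h₁.2 h₂.2
  obtain ⟨ℓ, hℓ, hcℓ⟩ := (hs c hc).2
  exact ⟨ℓ, mem_leaves.2 hℓ, hcℓ⟩

theorem treeReach_of_verifies (hc : c ∈ N.compRoots)
    (hinner : ¬ ∃ w, N.IsRetic w ∧ ∀ p, N.Arc p w → N.TreeReach c p) :
    ∀ v ∈ N.verts, N.Verifies v c → N.TreeReach c v := by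
  intro v
  induction v using hN.wellFounded_arc.induction with | _ v ih => ?_
  intro hv hvc
  by_cases hcv : v = c
  · subst hcv
    exact .refl
  have hroot : v ≠ N.root := by
    rintro rfl
    exact hcv hvc.eq_root.symm
  have hpar : ∀ p, N.Arc p v → N.TreeReach c p := fun p hp =>
    ih p hp (hN.mem_left hp) (hvc.of_arc hcv hp)
  have hvr : ¬ N.IsRetic v := fun hvr => hinner ⟨v, hvr, hpar⟩
  obtain ⟨p, hp⟩ := hN.exists_arc_of_ne_root hv hroot
  exact (hpar p hp).tail ⟨hp, hvr⟩

theorem exists_treeReach_arcs_isRetic (hc : c ∈ N.compRoots) (hx : ¬ N.IsExposed c) :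
    ∃ v a b, N.TreeReach c v ∧ a ≠ b ∧ N.Arc v a ∧ N.Arc v b ∧ N.IsRetic a ∧ N.IsRetic b := by
  classical
  obtain ⟨v, hv, hmax⟩ := exists_max_image (N.verts.filter (N.TreeReach c ·))
    (fun v => #(N.properAncestors v)) ⟨c, mem_filter.2 ⟨(mem_compRoots.1 hc).1, .refl⟩⟩
  obtain ⟨hvV, hcv⟩ := mem_filter.1 hv
  have hvr : ¬ N.IsRetic v := hcv.not_isRetic (mem_compRoots.1 hc).2.1
  have hout : N.outdeg v = 2 := by
    by_cases hroot : v = N.root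
    · exact hroot ▸ hN.outdeg_root
    rcases hN.degrees v hvV hroot with h | h | h
    · exact absurd ⟨v, ⟨hvV, h.2⟩, hcv⟩ hx
    · exact h.2
    · exact absurd ⟨hvV, h⟩ hvr
  -- a child that is not a reticulation would be a deeper vertex of the component
  have hchild : ∀ x, N.Arc v x → N.IsRetic x := fun x hx => by
    by_contra hxr
    exact (hmax x (mem_filter.2 ⟨hN.mem_right hx, hcv.tail ⟨hx, hxr⟩⟩)).not_gt
      (hN.card_properAncestors_lt hx)
  obtain ⟨a, b, hab, ha, hb⟩ := exists_arcs_ne_of_outdeg_eq_two hout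
  exact ⟨v, a, b, hcv, hab, ha, hb, hchild a ha, hchild b hb⟩

variable (hrv : N.ReticVisible)
include hrv

theorem not_isRetic_of_arc (hρ : N.IsRetic ρ) (hρc : N.Arc ρ c) : ¬ N.IsRetic c := by
  intro hc
  obtain ⟨ℓ, hℓ, hℓρ⟩ := hrv ρ hρ
  obtain ⟨q, hqρ, hqc⟩ := exists_arc_ne_of_indeg_eq_two hc.2.1 ρ
  have hcρ : c ≠ ρ := by
    rintro rfl
    exact hN.acyclic c (.single hρc)
  -- every path leaving `ρ` passes through `c`, so `ρ` is not an ancestor of `c`'s other parent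
  have hq : ¬ N.Verifies q ρ := fun hqρ' =>
    hN.acyclic c (.tail' ((hqρ'.ancestor hN (hN.mem_left hqc)).of_outdeg_eq_one hρ.2.2 hρc hqρ) hqc)
  have hdesc : ∀ x, N.Ancestor c x → ¬ N.Verifies x ρ := by
    intro x hx
    induction hx with
    | refl => exact fun hcρ' => hq (hcρ'.of_arc hcρ hqc)
    | tail hcy hyx ih =>
      refine fun hxρ => ih (hxρ.of_arc ?_ hyx)
      rintro rfl
      exact hN.acyclic c (.tail' (hcy.tail hyx) hρc)
  exact hdesc ℓ ((hℓρ.ancestor hN hℓ.1).of_outdeg_eq_one hρ.2.2 hρc (hℓ.ne_of_isRetic hρ)) hℓρ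

theorem card_retics_lt_card_compRoots : #N.retics < #N.compRoots := by
  have hroot : N.root ∈ N.compRoots := mem_compRoots.2 ⟨hN.root_mem, hN.not_isRetic_root,
    fun _ hu => absurd hu (not_arc_of_indeg_eq_zero hN.indeg_root)⟩
  rw [← card_erase_add_one hroot, Nat.lt_succ_iff]
  refine card_le_card_of_forall_subsingleton N.Arc (fun ρ hρ => ?_) fun c hc => ?_
  · have hρ := mem_retics.1 hρ
    obtain ⟨c, hρc⟩ := exists_arc_of_outdeg_ne_zero (hρ.2.2 ▸ one_ne_zero)
    have hcv := hN.mem_right hρc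
    have hcr := hN.not_isRetic_of_arc hrv hρ hρc
    have hc := hN.indeg_eq_one hcv (hN.ne_root_of_arc hρc) hcr
    refine ⟨c, mem_erase.2 ⟨hN.ne_root_of_arc hρc, mem_compRoots.2 ⟨hcv, hcr, fun u hu => ?_⟩⟩, hρc⟩
    rwa [eq_of_arc_of_indeg_eq_one hc hu hρc]
  · obtain ⟨hroot, hc⟩ := mem_erase.1 hc
    have hc := hN.indeg_eq_one (mem_compRoots.1 hc).1 hroot (mem_compRoots.1 hc).2.1
    exact fun ρ₁ h₁ ρ₂ h₂ => eq_of_arc_of_indeg_eq_one hc h₁.2 h₂.2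

theorem exists_isRetic_forall_treeReach (hX : N.leaves.Nonempty) (hc : c ∈ N.compRoots)
    (hx : ¬ N.IsExposed c) : ∃ w, N.IsRetic w ∧ ∀ p, N.Arc p w → N.TreeReach c p := by
  by_contra hinner
  suffices ∃ ℓ, N.IsLeaf ℓ ∧ N.Verifies ℓ c by
    obtain ⟨ℓ, hℓ, hℓc⟩ := this
    exact hx ⟨ℓ, hℓ, hN.treeReach_of_verifies hc hinner ℓ hℓ.1 hℓc⟩
  by_cases hroot : c = N.root
  · obtain ⟨ℓ, hℓ⟩ := hX
    exact ⟨ℓ, mem_leaves.1 hℓ, hroot ▸ verifies_root ℓ⟩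
  obtain ⟨ρ, hρc⟩ := hN.exists_arc_of_ne_root (mem_compRoots.1 hc).1 hroot
  have hρ := (mem_compRoots.1 hc).2.2 ρ hρc
  obtain ⟨ℓ, hℓ, hℓρ⟩ := hrv ρ hρ
  refine ⟨ℓ, hℓ, fun l hl => ?_⟩
  obtain ⟨y, hy, hρy⟩ := hl.exists_arc_of_mem (hℓρ l hl) (hℓ.ne_of_isRetic hρ).symm
  rwa [eq_of_arc_of_outdeg_eq_one hρ.2.2 hρc hρy]

open scoped Classical in
theorem three_le_card_reticArcs (hX : N.leaves.Nonempty) (hc : c ∈ N.compRoots)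
    (hx : ¬ N.IsExposed c) : 3 ≤ #(N.reticArcs.filter fun e => N.TreeReach c e.1) := by
  obtain ⟨v, a, b, hcv, hab, ha, hb, har, hbr⟩ := hN.exists_treeReach_arcs_isRetic hc hx
  obtain ⟨w, hw, hwc⟩ := hN.exists_isRetic_forall_treeReach hrv hX hc hx
  obtain ⟨p, hpv, hpw⟩ := exists_arc_ne_of_indeg_eq_two hw.2.1 v
  have hsub : {(v, a), (v, b), (p, w)} ⊆ N.reticArcs.filter fun e => N.TreeReach c e.1 := by
    simp only [insert_subset_iff, singleton_subset_iff, mem_filter, reticArcs, mem_retics]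
    exact ⟨⟨⟨ha, har⟩, hcv⟩, ⟨⟨hb, hbr⟩, hcv⟩, ⟨hpw, hw⟩, hwc p hpw⟩
  calc 3 = #{(v, a), (v, b), (p, w)} :=
        (card_eq_three.2 ⟨_, _, _, by simp [hab], by simp [hpv.symm], by simp [hpv.symm], rfl⟩).symm
    _ ≤ _ := card_le_card hsub

theorem three_mul_card_le {s : Finset V} (hX : N.leaves.Nonempty)
    (hs : ∀ c ∈ s, c ∈ N.compRoots ∧ ¬ N.IsExposed c) : 3 * #s ≤ 2 * #N.retics := by
  classical
  calc 3 * #s = #s * 3 := mul_comm _ _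
    _ ≤ #N.reticArcs * 1 := card_mul_le_card_mul (fun c (e : V × V) => N.TreeReach c e.1)
        (fun c hc => hN.three_le_card_reticArcs hrv hX (hs c hc).1 (hs c hc).2)
        fun _ _ => card_le_one.2 fun c₁ h₁ c₂ h₂ => by
          rw [mem_bipartiteBelow] at h₁ h₂
          exact hN.eq_of_treeReach (hs c₁ h₁.1).1 (hs c₂ h₂.1).1 h₁.2 h₂.2
    _ ≤ 2 * #N.retics := (mul_one _).trans_le card_reticArcs_le

theorem card_retics_add_three_le (hX : N.leaves.Nonempty) : #N.retics + 3 ≤ 3 * #N.leaves := by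
  classical
  have hsplit := card_filter_add_card_filter_not (s := N.compRoots) N.IsExposed
  have hcomp := hN.card_retics_lt_card_compRoots hrv
  have hexp := hN.card_le_card_leaves (s := N.compRoots.filter N.IsExposed)
    fun _ hc => mem_filter.1 hc
  have hunexp := hN.three_mul_card_le hrv (s := N.compRoots.filter (¬ N.IsExposed ·)) hX
    fun _ hc => mem_filter.1 hc
  omega

end IsRootedBinary

end Net

/-- A reticulation-visible phylogenetic network with `m = |X| ≥ 2` leaves has
at most `4m - 4` non-leaf, non-reticulation vertices (the root together with
the tree vertices). -/
theorem stmt_17 {V : Type} [DecidableEq V] (N : Net V)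
    (hphylo : N.IsPhylo) (hrv : N.ReticVisible)
    (hm : 2 ≤ N.leaves.card) :
    (N.verts.filter (fun v =>
        N.outdeg v ≠ 0 ∧ ¬ (N.indeg v = 2 ∧ N.outdeg v = 1))).card
      ≤ 4 * N.leaves.card - 4 := by
  have hleaves : N.leaves.card ≤ N.verts.card := Finset.card_le_card (Finset.filter_subset _ _)
  have hN := hphylo.isRootedBinary (by omega)
  have ht := hN.card_treeLikeVerts_add_one
  have hr := hN.card_retics_add_three_le hrv (Finset.card_pos.1 (by omega))
  change N.treeLikeVerts.card ≤ _
  omega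
end
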